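/- arXiv:2107.05774 — 3 statements merged into one kernel-verified Lean document; each statement's English description precedes it below -/
import Mathlib

section
/- Let k ≥ 1 and let p1 and p2 be two distinct primitive polynomials of degree k over GF(2), and let n ≥ 2k. Then the truncated PR codes S(p1,n) and S(p2,n) have no nonzero codeword in common, i.e., S(p1,n) ∩ S(p2,n) = {0}. -/
/-
Write `Φ_f(r) = ∑_{j<n} r_j f_j`. A sequence `f` of length `n` satisfies the recurrence with
characteristic polynomial `p` exactly when `Φ_f` kills every multiple `X^s p` of degree `< n`,
hence, by linearity, every multiple of `p` of degree `< n`. If `f` satisfies the recurrences of two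
coprime polynomials `p` and `q` with `deg p + deg q ≤ n`, a Bézout identity `X^m = a p + b q` with
`deg b < deg p` keeps both summands below degree `n`, so `f_m = Φ_f(X^m) = 0` for every `m < n`.
Distinct primitive polynomials are distinct monic irreducibles, hence coprime, and they have degree
`k` because a root of order `2^k - 1` generates `GF(2^k)`.
-/

/-- The truncated primitive rateless (PR) code `S(p,n)` for a polynomial `p` of degree `k`
over `GF(2)`: the set of vectors `c ∈ GF(2)^n` satisfying the linear recurrence
`∑_{i=0}^k p_i c_{j+i} = 0` for every `j` with `0 ≤ j ≤ n - k - 1`. -/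
def PRcode (k : ℕ) (p : Polynomial (ZMod 2)) (n : ℕ) : Set (Fin n → ZMod 2) :=
  {c | ∀ j : ℕ, j + k < n →
    ∑ i ∈ Finset.range (k + 1), p.coeff i * (if h : j + i < n then c ⟨j + i, h⟩ else 0) = 0}

/-- `p` is a primitive polynomial of degree `k` over `GF(2)`: it is the minimal polynomial of
some element `α` of `GF(2^k)` of multiplicative order `2^k - 1`. -/
def IsPrimitivePoly (k : ℕ) (p : Polynomial (ZMod 2)) : Prop :=
  ∃ α : GaloisField 2 k, orderOf α = 2 ^ k - 1 ∧ p = minpoly (ZMod 2) α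

open Polynomial Finset IntermediateField

section Recurrence

variable {K : Type*} [Field K]

noncomputable def seqFunctional (n : ℕ) (f : ℕ → K) : K[X] →ₗ[K] K :=
  ∑ j ∈ range n, f j • lcoeff K j

def SatisfiesRecurrence (p : K[X]) (n : ℕ) (f : ℕ → K) : Prop :=
  ∀ j, j + p.natDegree < n → ∑ i ∈ range (p.natDegree + 1), p.coeff i * f (j + i) = 0

theorem seqFunctional_apply (n : ℕ) (f : ℕ → K) (r : K[X]) :
    seqFunctional n f r = ∑ j ∈ range n, r.coeff j * f j := by
  simp [seqFunctional, mul_comm]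

theorem seqFunctional_X_pow {n m : ℕ} (f : ℕ → K) (hm : m < n) :
    seqFunctional n f (X ^ m) = f m := by
  simp [seqFunctional_apply, coeff_X_pow, hm]

theorem seqFunctional_X_pow_mul {n s : ℕ} (f : ℕ → K) {p : K[X]} (hs : s + p.natDegree < n) :
    seqFunctional n f (X ^ s * p) = ∑ i ∈ range (p.natDegree + 1), p.coeff i * f (s + i) := by
  conv_lhs => rw [p.as_sum_range_C_mul_X_pow, mul_sum, map_sum]
  refine sum_congr rfl fun i hi => ?_
  rw [mul_left_comm, ← pow_add, C_mul', map_smul,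
    seqFunctional_X_pow f (by rw [mem_range] at hi; omega), smul_eq_mul]

theorem SatisfiesRecurrence.seqFunctional_mul_eq_zero {p : K[X]} {n : ℕ} {f : ℕ → K}
    (h : SatisfiesRecurrence p n f) {r : K[X]} (hr : (r * p).natDegree < n) :
    seqFunctional n f (r * p) = 0 := by
  rcases eq_or_ne r 0 with rfl | hr0
  · simp
  rcases eq_or_ne p 0 with rfl | hp0
  · simp
  rw [natDegree_mul hr0 hp0] at hr
  conv_lhs => rw [r.as_sum_range_C_mul_X_pow, sum_mul, map_sum]
  refine sum_eq_zero fun s hs => ?_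
  have hs' : s + p.natDegree < n := by rw [mem_range] at hs; omega
  rw [mul_assoc, C_mul', map_smul, seqFunctional_X_pow_mul f hs', h s hs', smul_zero]

theorem IsCoprime.exists_eq_mul_add_mul_natDegree_lt {p q : K[X]} (hpq : IsCoprime p q)
    (hp : p.natDegree ≠ 0) (r : K[X]) :
    ∃ a b : K[X], r = a * p + b * q ∧ b.natDegree < p.natDegree := by
  obtain ⟨u, v, huv⟩ := hpq
  refine ⟨r * u + r * v / p * q, r * v % p, ?_, natDegree_mod_lt _ hp⟩
  linear_combination (-r) * huv - q * EuclideanDomain.div_add_mod (r * v) p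

theorem SatisfiesRecurrence.eq_zero_of_isCoprime {p q : K[X]} {n : ℕ} {f : ℕ → K}
    (hp : SatisfiesRecurrence p n f) (hq : SatisfiesRecurrence q n f) (hpq : IsCoprime p q)
    (hp0 : p.natDegree ≠ 0) (hn : p.natDegree + q.natDegree ≤ n) {m : ℕ} (hm : m < n) :
    f m = 0 := by
  obtain ⟨a, b, hab, hb⟩ := hpq.exists_eq_mul_add_mul_natDegree_lt hp0 (X ^ m)
  have hbq : (b * q).natDegree < n := natDegree_mul_le.trans_lt (by omega)
  have hap : (a * p).natDegree < n := by
    rw [eq_sub_of_add_eq hab.symm]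
    exact (natDegree_sub_le _ _).trans_lt (max_lt (by simpa) hbq)
  rw [← seqFunctional_X_pow f hm, hab, map_add, hp.seqFunctional_mul_eq_zero hap,
    hq.seqFunctional_mul_eq_zero hbq, add_zero]

theorem Polynomial.isCoprime_of_monic_of_irreducible {p q : K[X]} (hp : p.Monic) (hq : q.Monic)
    (hpi : Irreducible p) (hqi : Irreducible q) (hne : p ≠ q) : IsCoprime p q :=
  hpi.coprime_iff_not_dvd.2 fun hdvd =>
    hne (eq_of_monic_of_associated hp hq (hpi.associated_of_dvd hqi hdvd))

end Recurrence

section FiniteField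

variable {K L : Type*} [Field K] [Field L] [Finite L] [Algebra K L]

theorem IntermediateField.adjoin_simple_eq_top_of_orderOf_eq {α : L}
    (hα : orderOf α = Nat.card L - 1) : K⟮α⟯ = ⊤ := by
  have hα0 : α ≠ 0 := by
    rintro rfl
    have := Finite.one_lt_card (α := L)
    rw [orderOf_zero] at hα
    omega
  set u := Units.mk0 α hα0
  have hu : Subgroup.zpowers u = ⊤ := Subgroup.eq_top_of_card_eq _ <| by
    rw [Nat.card_zpowers, ← orderOf_units, Units.val_mk0, Nat.card_units, hα]
  refine eq_top_iff.2 fun x _ => ?_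
  rcases eq_or_ne x 0 with rfl | hx
  · exact zero_mem _
  obtain ⟨m, hm⟩ := mem_powers_iff_mem_zpowers.2 (hu ▸ Subgroup.mem_top (Units.mk0 x hx))
  rw [← Units.val_mk0 hx, ← hm, Units.val_pow_eq_pow_val, Units.val_mk0]
  exact pow_mem (mem_adjoin_simple_self K α) m

theorem minpoly.natDegree_eq_finrank_of_orderOf_eq {α : L} (hα : orderOf α = Nat.card L - 1) :
    (minpoly K α).natDegree = Module.finrank K L := by
  rw [← adjoin.finrank (.of_finite K α),
    adjoin_simple_eq_top_of_orderOf_eq hα, finrank_top']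

end FiniteField

namespace IsPrimitivePoly

variable {k : ℕ} {p : (ZMod 2)[X]}

theorem monic (h : IsPrimitivePoly k p) : p.Monic := by
  obtain ⟨α, -, rfl⟩ := h
  exact minpoly.monic (.of_finite _ α)

theorem irreducible (h : IsPrimitivePoly k p) : Irreducible p := by
  obtain ⟨α, -, rfl⟩ := h
  exact minpoly.irreducible (.of_finite _ α)

theorem natDegree_eq (h : IsPrimitivePoly k p) (hk : k ≠ 0) : p.natDegree = k := by
  obtain ⟨α, hα, rfl⟩ := h
  rw [minpoly.natDegree_eq_finrank_of_orderOf_eq (by rwa [GaloisField.card 2 k hk]),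
    GaloisField.finrank 2 hk]

end IsPrimitivePoly

theorem mem_PRcode_iff {k n : ℕ} {p : (ZMod 2)[X]} (hp : p.natDegree = k) {c : Fin n → ZMod 2} :
    c ∈ PRcode k p n ↔ SatisfiesRecurrence p n (fun j => if h : j < n then c ⟨j, h⟩ else 0) := by
  subst hp
  rfl

theorem stmt0 (k n : ℕ) (hk : 1 ≤ k) (hn : 2 * k ≤ n)
    (p1 p2 : Polynomial (ZMod 2))
    (h1 : IsPrimitivePoly k p1) (h2 : IsPrimitivePoly k p2) (hne : p1 ≠ p2) :
    PRcode k p1 n ∩ PRcode k p2 n = {0} := by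
  have hdeg1 := h1.natDegree_eq (by omega)
  have hdeg2 := h2.natDegree_eq (by omega)
  have hcop := isCoprime_of_monic_of_irreducible h1.monic h2.monic h1.irreducible h2.irreducible hne
  ext c
  refine ⟨fun ⟨hc1, hc2⟩ => funext fun i => ?_, ?_⟩
  · have := ((mem_PRcode_iff hdeg1).1 hc1).eq_zero_of_isCoprime ((mem_PRcode_iff hdeg2).1 hc2)
      hcop (by omega) (by omega) i.isLt
    simpa using this
  · rintro rfl
    exact ⟨fun j _ => by simp, fun j _ => by simp⟩
end

section
/- Let k ≥ 1, n ≥ 2k and d be natural numbers. If Σ_{j=1}^{d} C(n,j) < φ(2^k − 1)/k, then there exists a primitive polynomial p of degree k over GF(2) such that the truncated PR code S(p,n) has minimum Hamming weight greater than d, i.e., every nonzero codeword c ∈ S(p,n) satisfies w(c) > d. -/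
/-!
Let `p` be the minimal polynomial of a generator `α` of `GF(2^k)`. A codeword of `S(p, n)` is
determined by its first `k` entries, and by nondegeneracy of the trace form these can be matched by
`i ↦ Tr(γ α^i)`; so every codeword is such a trace word. If a nonzero trace word also lies in
`S(q, n)` with `q` monic of degree at most `k` and `n ≥ 2k`, then the first `k` windows of the
`q`-recurrence read `Tr(γ q(α) α^j) = 0` for `j < k`, so `q(α) = 0` and `q = p`. Hence a nonzero
vector lies in at most one of the codes. There are at least `φ(2^k - 1)/k` primitive polynomials
but fewer nonzero vectors of weight at most `d`, so by pigeonhole some code contains none of them.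
-/

open Polynomial Finset

section TraceDuality

variable {K L : Type*} [Field K] [Field L] [Algebra K L] [FiniteDimensional K L]
  [Algebra.IsSeparable K L]

theorem PowerBasis.exists_trace_mul_pow_eq (pb : PowerBasis K L) (v : Fin pb.dim → K) :
    ∃ γ : L, ∀ i : Fin pb.dim, Algebra.trace K L (γ * pb.gen ^ (i : ℕ)) = v i := by
  let b := (Algebra.traceForm K L).dualBasis (traceForm_nondegenerate K L) pb.basis
  refine ⟨b.equivFun.symm v, fun i => ?_⟩
  have := congr_fun (b.equivFun.apply_symm_apply v) i
  rwa [Module.Basis.equivFun_apply, LinearMap.BilinForm.dualBasis_repr_apply, pb.basis_eq_pow,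
    Algebra.traceForm_apply] at this

theorem PowerBasis.eq_zero_of_trace_mul_pow_eq_zero (pb : PowerBasis K L) {δ : L}
    (h : ∀ i : Fin pb.dim, Algebra.trace K L (δ * pb.gen ^ (i : ℕ)) = 0) : δ = 0 := by
  let b := (Algebra.traceForm K L).dualBasis (traceForm_nondegenerate K L) pb.basis
  refine b.repr.map_eq_zero_iff.mp (Finsupp.ext fun i => ?_)
  rw [LinearMap.BilinForm.dualBasis_repr_apply, pb.basis_eq_pow, Algebra.traceForm_apply]
  exact h i

end TraceDuality

theorem sum_coeff_mul_trace_mul_pow {K L : Type*} [CommRing K] [CommRing L] [Algebra K L]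
    {q : K[X]} {k : ℕ} (hq : q.natDegree ≤ k) (γ α : L) (j : ℕ) :
    ∑ i ∈ range (k + 1), q.coeff i * Algebra.trace K L (γ * α ^ (j + i)) =
      Algebra.trace K L (γ * aeval α q * α ^ j) := by
  rw [aeval_eq_sum_range' (Nat.lt_succ_of_le hq), mul_sum, sum_mul, map_sum]
  refine sum_congr rfl fun i _ => ?_
  rw [← smul_eq_mul, ← map_smul, pow_add]
  congr 1
  rw [Algebra.smul_def, Algebra.smul_def]
  ring

section PRcode

theorem sub_mem_PRcode {k n : ℕ} {p : (ZMod 2)[X]} {c c' : Fin n → ZMod 2}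
    (hc : c ∈ PRcode k p n) (hc' : c' ∈ PRcode k p n) : c - c' ∈ PRcode k p n := by
  intro j hj
  have h := congrArg₂ (· - ·) (hc j hj) (hc' j hj)
  simp only [sub_zero, ← sum_sub_distrib, ← mul_sub] at h
  convert h using 3 with i
  split_ifs <;> simp

theorem eq_zero_of_mem_PRcode {k n : ℕ} {p : (ZMod 2)[X]} (hp : p.coeff k = 1)
    {c : Fin n → ZMod 2} (hc : c ∈ PRcode k p n)
    (h0 : ∀ i : Fin n, (i : ℕ) < k → c i = 0) : c = 0 := by
  funext ⟨m, hm⟩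
  induction m using Nat.strong_induction_on with
  | _ m ih =>
    rcases lt_or_ge m k with hmk | hmk
    · exact h0 _ hmk
    obtain ⟨j, rfl⟩ := Nat.exists_eq_add_of_le' hmk
    have hrec := hc j hm
    rw [sum_range_succ, sum_eq_zero fun i hi => ?_, zero_add, dif_pos hm, hp, one_mul] at hrec
    · exact hrec
    · rw [mem_range] at hi
      rw [dif_pos (by omega), ih _ (by omega), Pi.zero_apply, mul_zero]

variable {L : Type*} [Field L] [Algebra (ZMod 2) L]

noncomputable def traceWord (n : ℕ) (γ α : L) : Fin n → ZMod 2 :=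
  fun i => Algebra.trace (ZMod 2) L (γ * α ^ (i : ℕ))

theorem traceWord_mem_PRcode_iff {k n : ℕ} {q : (ZMod 2)[X]} (hq : q.natDegree ≤ k)
    (γ α : L) :
    traceWord n γ α ∈ PRcode k q n ↔
      ∀ j, j + k < n → Algebra.trace (ZMod 2) L (γ * aeval α q * α ^ j) = 0 := by
  refine forall₂_congr fun j hj => ?_
  rw [← sum_coeff_mul_trace_mul_pow hq]
  refine Eq.congr_left (sum_congr rfl fun i hi => ?_)
  rw [mem_range] at hi
  rw [dif_pos (by omega)]
  rfl

variable [FiniteDimensional (ZMod 2) L] [Algebra.IsSeparable (ZMod 2) L]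

theorem exists_traceWord_eq_of_mem_PRcode (pb : PowerBasis (ZMod 2) L) {n : ℕ}
    (hn : pb.dim ≤ n) {c : Fin n → ZMod 2}
    (hc : c ∈ PRcode pb.dim (minpoly (ZMod 2) pb.gen) n) :
    ∃ γ, c = traceWord n γ pb.gen := by
  obtain ⟨γ, hγ⟩ := pb.exists_trace_mul_pow_eq fun i => c ⟨i, i.2.trans_le hn⟩
  have hmem : traceWord n γ pb.gen ∈ PRcode pb.dim (minpoly (ZMod 2) pb.gen) n :=
    (traceWord_mem_PRcode_iff pb.natDegree_minpoly.le γ pb.gen).2 fun j _ => by simp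
  have hcoeff : (minpoly (ZMod 2) pb.gen).coeff pb.dim = 1 := by
    rw [← pb.natDegree_minpoly]
    exact (minpoly.monic pb.isIntegral_gen).coeff_natDegree
  refine ⟨γ, sub_eq_zero.mp <|
    eq_zero_of_mem_PRcode hcoeff (sub_mem_PRcode hc hmem) fun i hi => ?_⟩
  simpa [traceWord, sub_eq_zero] using (hγ ⟨(i : ℕ), hi⟩).symm

theorem minpoly_eq_of_mem_PRcode (pb : PowerBasis (ZMod 2) L) {n : ℕ} (hn : 2 * pb.dim ≤ n)
    {q : (ZMod 2)[X]} (hq : q.Monic) (hq_deg : q.natDegree ≤ pb.dim) {c : Fin n → ZMod 2}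
    (hc0 : c ≠ 0) (hcp : c ∈ PRcode pb.dim (minpoly (ZMod 2) pb.gen) n)
    (hcq : c ∈ PRcode pb.dim q n) : q = minpoly (ZMod 2) pb.gen := by
  obtain ⟨γ, rfl⟩ := exists_traceWord_eq_of_mem_PRcode pb (by omega) hcp
  have hγ : γ ≠ 0 := by
    rintro rfl
    exact hc0 (funext fun i => by simp [traceWord])
  -- `n ≥ 2 dim` leaves room for `dim` consecutive windows of the `q`-recurrence.
  have hroot : aeval pb.gen q = 0 := by
    refine (mul_eq_zero.mp (pb.eq_zero_of_trace_mul_pow_eq_zero fun i => ?_)).resolve_left hγ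
    exact (traceWord_mem_PRcode_iff hq_deg γ pb.gen).1 hcq i (by omega)
  exact eq_of_monic_of_dvd_of_natDegree_le (minpoly.monic pb.isIntegral_gen) hq
    (minpoly.dvd _ _ hroot) (pb.natDegree_minpoly ▸ hq_deg)

end PRcode

theorem IsPrimitiveRoot.adjoin_eq_top_of_card_sub_one {K F : Type*} [Field K] [Field F]
    [Finite F] [Algebra K F] {α : F} (hα : IsPrimitiveRoot α (Nat.card F - 1)) :
    Algebra.adjoin K {α} = ⊤ := by
  have : NeZero (Nat.card F - 1) := ⟨by have := Finite.one_lt_card (α := F); omega⟩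
  refine eq_top_iff.mpr fun x _ => ?_
  rcases eq_or_ne x 0 with rfl | hx
  · exact zero_mem _
  have hx1 : x ^ (Nat.card F - 1) = 1 := by
    simpa [Nat.card_units] using congrArg Units.val (pow_card_eq_one' (G := Fˣ) (x := .mk0 x hx))
  obtain ⟨i, -, rfl⟩ := hα.eq_pow_of_pow_eq_one hx1
  exact pow_mem (Algebra.self_mem_adjoin_singleton K α) i

theorem FiniteField.card_primitiveRoots_card_sub_one (F : Type*) [Field F] [Finite F] :
    #(primitiveRoots (Nat.card F - 1) F) = Nat.totient (Nat.card F - 1) := by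
  obtain ⟨g, hg⟩ := IsCyclic.exists_ofOrder_eq_natCard (α := Fˣ)
  refine IsPrimitiveRoot.card_primitiveRoots (ζ := (g : F)) ?_
  rw [IsPrimitiveRoot.iff_orderOf, orderOf_units, hg, Nat.card_units]

theorem card_filter_minpoly_eq_le_finrank {K L : Type*} [Field K] [Field L] [Algebra K L]
    [FiniteDimensional K L] [DecidableEq K[X]] (s : Finset L) (p : K[X]) :
    #{x ∈ s | minpoly K x = p} ≤ Module.finrank K L := by
  rcases (s.filter fun x => minpoly K x = p).eq_empty_or_nonempty with h | ⟨x₀, hx₀⟩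
  · simp [h]
  obtain rfl := (mem_filter.mp hx₀).2
  calc #{x ∈ s | minpoly K x = minpoly K x₀}
      ≤ ((minpoly K x₀).rootSet L).ncard := by
        rw [← Set.ncard_coe_finset]
        refine Set.ncard_le_ncard (fun x hx => ?_) ((minpoly K x₀).rootSet_finite L)
        rw [mem_coe, mem_filter] at hx
        rw [mem_rootSet, ← hx.2]
        exact ⟨minpoly.ne_zero (Algebra.IsIntegral.isIntegral x), minpoly.aeval K x⟩
    _ ≤ (minpoly K x₀).natDegree := ncard_rootSet_le _ _
    _ ≤ Module.finrank K L := minpoly.natDegree_le x₀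

theorem exists_finset_isPrimitivePoly {k : ℕ} (hk : k ≠ 0) :
    ∃ P : Finset (ZMod 2)[X], (∀ p ∈ P, IsPrimitivePoly k p) ∧
      Nat.totient (2 ^ k - 1) ≤ k * #P := by
  classical
  have hcard := GaloisField.card 2 k hk
  refine ⟨(primitiveRoots (2 ^ k - 1) (GaloisField 2 k)).image (minpoly (ZMod 2)), ?_, ?_⟩
  · simp only [mem_image]
    rintro _ ⟨α, hα, rfl⟩
    rw [mem_primitiveRoots (by have := Nat.one_lt_two_pow hk; omega),
      IsPrimitiveRoot.iff_orderOf] at hα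
    exact ⟨α, hα, rfl⟩
  · rw [← hcard, ← FiniteField.card_primitiveRoots_card_sub_one]
    exact card_le_mul_card_image _ k fun p _ =>
      (card_filter_minpoly_eq_le_finrank _ _).trans (GaloisField.finrank 2 hk).le

theorem IsPrimitivePoly.exists_powerBasis {k : ℕ} (hk : k ≠ 0) {p : (ZMod 2)[X]}
    (hp : IsPrimitivePoly k p) :
    ∃ pb : PowerBasis (ZMod 2) (GaloisField 2 k), pb.dim = k ∧ p = minpoly (ZMod 2) pb.gen := by
  obtain ⟨α, hα, rfl⟩ := hp
  have hprim : IsPrimitiveRoot α (Nat.card (GaloisField 2 k) - 1) := by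
    rwa [GaloisField.card 2 k hk, IsPrimitiveRoot.iff_orderOf]
  let pb := PowerBasis.ofAdjoinEqTop (IsIntegral.of_finite (ZMod 2) α)
    hprim.adjoin_eq_top_of_card_sub_one
  exact ⟨pb, by rw [← pb.finrank, GaloisField.finrank 2 hk], rfl⟩

theorem IsPrimitivePoly.eq_of_mem_PRcode {k n : ℕ} (hk : k ≠ 0) (hn : 2 * k ≤ n)
    {p q : (ZMod 2)[X]} (hp : IsPrimitivePoly k p) (hq : IsPrimitivePoly k q)
    {c : Fin n → ZMod 2} (hc0 : c ≠ 0) (hcp : c ∈ PRcode k p n) (hcq : c ∈ PRcode k q n) :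
    p = q := by
  obtain ⟨pb, hpb, rfl⟩ := hp.exists_powerBasis hk
  obtain ⟨pbq, hpbq, rfl⟩ := hq.exists_powerBasis hk
  refine (minpoly_eq_of_mem_PRcode pb (by rwa [hpb]) (minpoly.monic pbq.isIntegral_gen)
    (by rw [pbq.natDegree_minpoly, hpb, hpbq]) hc0 (by rwa [hpb]) (by rwa [hpb])).symm

theorem injective_filter_ne_zero (ι : Type*) [Fintype ι] :
    Function.Injective fun c : ι → ZMod 2 => ({i | c i ≠ 0} : Finset ι) := by
  intro c c' h
  funext i
  have key : ∀ x y : ZMod 2, (x ≠ 0 ↔ y ≠ 0) → x = y := by decide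
  exact key _ _ (by simpa using Finset.ext_iff.mp h i)

theorem card_filter_ne_zero_hammingNorm_le (n d : ℕ) :
    #{c : Fin n → ZMod 2 | c ≠ 0 ∧ hammingNorm c ≤ d} ≤
      ∑ j ∈ Icc 1 d, n.choose j := by
  classical
  rw [card_eq_sum_card_fiberwise (f := hammingNorm) (t := Icc 1 d) fun c hc => ?_]
  · gcongr with j
    calc #{c ∈ {c : Fin n → ZMod 2 | c ≠ 0 ∧ hammingNorm c ≤ d} | hammingNorm c = j}
        ≤ #(powersetCard j (univ : Finset (Fin n))) :=
          card_le_card_of_injOn _ (fun c hc => mem_powersetCard.mpr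
            ⟨subset_univ _, (mem_filter.mp hc).2⟩) (injective_filter_ne_zero (Fin n)).injOn
      _ = n.choose j := by simp
  · simp only [coe_filter, mem_univ, true_and, Set.mem_ofPred_eq, coe_Icc, Set.mem_Icc] at hc ⊢
    exact ⟨hammingNorm_pos_iff.mpr hc.1, hc.2⟩

theorem stmt7 (k n d : ℕ) (hk : 1 ≤ k) (hn : 2 * k ≤ n)
    (hsum : ∑ j ∈ Finset.Icc 1 d, Nat.choose n j < Nat.totient (2 ^ k - 1) / k) :
    ∃ p : Polynomial (ZMod 2), IsPrimitivePoly k p ∧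
      ∀ c ∈ PRcode k p n, c ≠ 0 → d < hammingNorm c := by
  classical
  have hk0 : k ≠ 0 := by omega
  by_contra! h
  choose! f hf_mem hf_ne hf_le using h
  obtain ⟨P, hP, hcard⟩ := exists_finset_isPrimitivePoly hk0
  have hlt : #{c : Fin n → ZMod 2 | c ≠ 0 ∧ hammingNorm c ≤ d} < #P :=
    calc _ ≤ ∑ j ∈ Icc 1 d, n.choose j := card_filter_ne_zero_hammingNorm_le n d
      _ < Nat.totient (2 ^ k - 1) / k := hsum
      _ ≤ #P := Nat.div_le_of_le_mul hcard
  obtain ⟨p, hp, q, hq, hpq, hfpq⟩ := exists_ne_map_eq_of_card_lt_of_maps_to hlt (f := f)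
    fun p hp => by simp [hf_ne p (hP p hp), hf_le p (hP p hp)]
  exact hpq ((hP p hp).eq_of_mem_PRcode hk0 hn (hP q hq) (hf_ne p (hP p hp))
    (hf_mem p (hP p hp)) (hfpq ▸ hf_mem q (hP q hq)))
end

section
/- Let α be an element of the finite field GF(2^k) of multiplicative order 2^k − 1, let p be its minimal polynomial over GF(2) (so p is primitive of degree k), let f : GF(2^k) → GF(2) be a nonzero GF(2)-linear map, and let n ≥ k. Then the truncated PR code S(p,n) equals the set { (f(β·α^0), f(β·α^1), …, f(β·α^{n−1})) : β ∈ GF(2^k) }, and the map sending β ∈ GF(2^k) to the vector (f(β·α^i))_{0 ≤ i < n} is injective. -/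
open Polynomial

theorem Algebra.adjoin_singleton_eq_top_of_orderOf_eq {K L : Type*} [Field K] [Field L]
    [Algebra K L] [Finite L] {α : L} (hα : orderOf α = Nat.card L - 1) :
    Algebra.adjoin K {α} = ⊤ := by
  refine Algebra.eq_top_iff.2 fun x => ?_
  rcases eq_or_ne x 0 with rfl | hx
  · exact Subalgebra.zero_mem _
  have hα0 : α ≠ 0 := by
    rintro rfl
    have := Finite.one_lt_card (α := L)
    rw [orderOf_zero] at hα
    omega
  let u := Units.mk0 α hα0
  have hu : Subgroup.zpowers u = ⊤ := Subgroup.eq_top_of_card_eq _ <| by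
    rw [Nat.card_zpowers, ← orderOf_units, Units.val_mk0, hα, Nat.card_units]
  obtain ⟨m, hm⟩ : Units.mk0 x hx ∈ Submonoid.powers u := by
    rw [mem_powers_iff_mem_zpowers, hu]
    exact Subgroup.mem_top _
  rw [← Units.val_mk0 hx, ← hm, Units.val_pow_eq_pow_val, Units.val_mk0]
  exact pow_mem (Algebra.self_mem_adjoin_singleton K α) m

section PowerBasis

variable {K L : Type*} [Field K] [Field L] [Algebra K L] {α : L}

theorem minpoly_natDegree_eq_finrank_of_adjoin_eq_top (hint : IsIntegral K α)
    (hadj : Algebra.adjoin K {α} = ⊤) : (minpoly K α).natDegree = Module.finrank K L :=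
  (PowerBasis.ofAdjoinEqTop hint hadj).finrank.symm

theorem eq_zero_of_forall_apply_mul_pow_eq_zero (hint : IsIntegral K α)
    (hadj : Algebra.adjoin K {α} = ⊤) {f : L →ₗ[K] K} (hf : f ≠ 0) {β : L}
    (h : ∀ i < (minpoly K α).natDegree, f (β * α ^ i) = 0) : β = 0 := by
  by_contra hβ
  have hcomp : f ∘ₗ LinearMap.mulLeft K β = 0 :=
    (PowerBasis.ofAdjoinEqTop hint hadj).basis.ext fun i => by
      rw [LinearMap.comp_apply, LinearMap.mulLeft_apply, PowerBasis.basis_eq_pow,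
        PowerBasis.ofAdjoinEqTop_gen]
      exact h i i.2
  exact hf <| LinearMap.ext fun x => by
    simpa [← mul_assoc, hβ] using LinearMap.congr_fun hcomp (β⁻¹ * x)

theorem injective_apply_mul_pow (hint : IsIntegral K α) (hadj : Algebra.adjoin K {α} = ⊤)
    {f : L →ₗ[K] K} (hf : f ≠ 0) {n : ℕ} (hn : (minpoly K α).natDegree ≤ n) :
    Function.Injective fun β : L => fun i : Fin n => f (β * α ^ (i : ℕ)) := by
  intro β₁ β₂ h
  rw [← sub_eq_zero]
  refine eq_zero_of_forall_apply_mul_pow_eq_zero hint hadj hf fun i hi => ?_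
  rw [sub_mul, map_sub, sub_eq_zero]
  exact congrFun h ⟨i, hi.trans_le hn⟩

end PowerBasis

namespace PRcode

variable {k n : ℕ} {p : (ZMod 2)[X]}

theorem apply_mul_pow_mem {A : Type*} [CommRing A] [Algebra (ZMod 2) A] {α : A}
    (hp : aeval α p = 0) (hdeg : p.natDegree ≤ k) (f : A →ₗ[ZMod 2] ZMod 2) (β : A) :
    (fun i : Fin n => f (β * α ^ (i : ℕ))) ∈ PRcode k p n := by
  intro j hj
  calc ∑ i ∈ Finset.range (k + 1), p.coeff i *
        (if h : j + i < n then f (β * α ^ ((⟨j + i, h⟩ : Fin n) : ℕ)) else 0)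
      = ∑ i ∈ Finset.range (k + 1), f (β * α ^ j * p.coeff i • α ^ i) := by
        refine Finset.sum_congr rfl fun i hi => ?_
        have hji : j + i < n := by rw [Finset.mem_range] at hi; omega
        rw [dif_pos hji]
        simp only [mul_smul_comm, map_smul, smul_eq_mul, pow_add, mul_assoc]
    _ = f (β * α ^ j * aeval α p) := by
        rw [aeval_eq_sum_range' (n := k + 1) (by omega), Finset.mul_sum, map_sum]
    _ = 0 := by rw [hp, mul_zero, map_zero]

theorem eq_of_forall_lt (hk : p.coeff k = 1) {c c' : Fin n → ZMod 2}
    (hc : c ∈ PRcode k p n) (hc' : c' ∈ PRcode k p n) (h : ∀ i : Fin n, (i : ℕ) < k → c i = c' i) :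
    c = c' := by
  suffices ∀ m (hm : m < n), c ⟨m, hm⟩ = c' ⟨m, hm⟩ from funext fun i => this i i.2
  intro m
  induction m using Nat.strong_induction_on with
  | _ m ih =>
    intro hm
    rcases lt_or_ge m k with hmk | hmk
    · exact h ⟨m, hm⟩ hmk
    obtain ⟨j, rfl⟩ : ∃ j, m = j + k := ⟨m - k, by omega⟩
    -- Since `p_k = 1`, the recurrence at `j` expresses `c_{j+k}` through earlier terms.
    have h₁ := hc j hm
    have h₂ := hc' j hm
    rw [Finset.sum_range_succ, dif_pos hm, hk, one_mul] at h₁ h₂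
    have hlow : ∑ i ∈ Finset.range k, p.coeff i * (if h : j + i < n then c ⟨j + i, h⟩ else 0)
        = ∑ i ∈ Finset.range k, p.coeff i * (if h : j + i < n then c' ⟨j + i, h⟩ else 0) := by
      refine Finset.sum_congr rfl fun i hi => ?_
      rw [Finset.mem_range] at hi
      have hji : j + i < n := by omega
      rw [dif_pos hji, dif_pos hji, ih (j + i) (by omega) hji]
    rw [hlow] at h₁
    exact add_left_cancel (h₁.trans h₂.symm)

theorem ncard_le (hk : p.coeff k = 1) (hn : k ≤ n) : (PRcode k p n).ncard ≤ 2 ^ k := by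
  calc (PRcode k p n).ncard
      ≤ (Set.univ : Set (Fin k → ZMod 2)).ncard := by
        refine Set.ncard_le_ncard_of_injOn (fun c i => c ⟨i, i.2.trans_le hn⟩)
          (fun _ _ => Set.mem_univ _) (fun c hc c' hc' hcc => ?_)
        exact eq_of_forall_lt hk hc hc' fun i hi => by simpa using congrFun hcc ⟨i, hi⟩
    _ = 2 ^ k := by simp [Set.ncard_univ]

end PRcode

theorem stmt10 (k n : ℕ) (hk : 1 ≤ k) (hn : k ≤ n)
    (α : GaloisField 2 k) (hα : orderOf α = 2 ^ k - 1)
    (p : Polynomial (ZMod 2)) (hp : p = minpoly (ZMod 2) α)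
    (f : GaloisField 2 k →ₗ[ZMod 2] ZMod 2) (hf : f ≠ 0) :
    PRcode k p n =
      {c : Fin n → ZMod 2 | ∃ β : GaloisField 2 k, c = fun i : Fin n => f (β * α ^ (i : ℕ))} ∧
    Function.Injective
      (fun (β : GaloisField 2 k) => (fun i : Fin n => f (β * α ^ (i : ℕ)))) := by
  have hcard : Nat.card (GaloisField 2 k) = 2 ^ k := GaloisField.card 2 k (by omega)
  have hint : IsIntegral (ZMod 2) α := .of_finite _ _
  have hadj : Algebra.adjoin (ZMod 2) {α} = ⊤ :=
    Algebra.adjoin_singleton_eq_top_of_orderOf_eq (by rwa [hcard])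
  have hdeg : p.natDegree = k := by
    rw [hp, minpoly_natDegree_eq_finrank_of_adjoin_eq_top hint hadj,
      GaloisField.finrank 2 (by omega)]
  have hinj := injective_apply_mul_pow (n := n) hint hadj hf (by rwa [← hp, hdeg])
  refine ⟨(Set.eq_of_subset_of_ncard_le ?_ ?_ (Set.toFinite _)).symm, hinj⟩
  · rintro c ⟨β, rfl⟩
    exact PRcode.apply_mul_pow_mem (hp ▸ minpoly.aeval _ _) hdeg.le f β
  · have hmonic : p.Monic := hp ▸ minpoly.monic hint
    calc (PRcode k p n).ncard ≤ 2 ^ k := PRcode.ncard_le (hdeg ▸ hmonic.coeff_natDegree) hn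
      _ = (Set.range _).ncard := by
        rw [← Nat.card_coe_set_eq, Nat.card_range_of_injective hinj, hcard]
      _ = _ := congrArg Set.ncard <| Set.ext fun _ => exists_congr fun _ => eq_comm
end
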